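/- arXiv:1912.10410 — 4 statements merged into one kernel-verified Lean document; each statement's English description precedes it below -/
import Mathlib

section
/- If s(k) is the unique power series solution of k²s⁴ − 2k²s³ + 2s − 1 = 0 with s(0) = 1/2, and s(k) = ∑ₙ sₙ kⁿ, then the coefficients satisfy the linear recurrence (3n+10)(3n+14)(n+2)·s_{n+4} + n(3n+2)(3n+4)·sₙ = 2(9n³ + 54n² + 106n + 70)·s_{n+2} for all n ≥ 0. -/
/-!
Since `s(0) = 1/2`, the series `s`, `s - 1` and `2 - s` are units. Write `θ = k d/dk`.
Applying `θ` to the quartic gives `3 (s - 1)² θs = s (2s - 1)(2 - s)`, so in the coordinate `s`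
the operator `θ` acts as a rational function of `s` times `d/ds`, and the quartic itself says
`k² = (2s - 1) / (s³ (2 - s))`. The differential equation, written with `θ`, therefore becomes an
identity between rational functions of `s` alone, which we check in the fraction field of `ℝ⟦k⟧`.
The recurrence is its coefficient of `k^(n+4)`.
-/

open PowerSeries

theorem Derivation.map_ofNat {R A M : Type*} [CommSemiring R] [CommSemiring A] [AddCommMonoid M]
    [Algebra R A] [Module A M] [Module R M] (D : Derivation R A M) (n : ℕ) [n.AtLeastTwo] :
    D (no_index (OfNat.ofNat n : A)) = 0 :=
  D.map_natCast n

namespace PowerSeries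

instance {R : Type*} [CommSemiring R] [CharZero R] : CharZero R⟦X⟧ :=
  charZero_of_injective_ringHom C_injective

variable {R : Type*} [CommRing R]

theorem coeff_ofNat_mul (m : ℕ) [m.AtLeastTwo] (f : R⟦X⟧) (n : ℕ) :
    coeff n ((no_index (OfNat.ofNat m) : R⟦X⟧) * f) = OfNat.ofNat m * coeff n f := by
  rw [← map_ofNat C m, coeff_C_mul]

theorem coeff_ofNat (m : ℕ) [m.AtLeastTwo] (n : ℕ) :
    coeff n (no_index (OfNat.ofNat m) : R⟦X⟧) = if n = 0 then OfNat.ofNat m else 0 := by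
  rw [← map_ofNat C m, coeff_C]

variable (R) in
noncomputable def eulerDerivation : Derivation R R⟦X⟧ R⟦X⟧ := (X : R⟦X⟧) • d⁄dX R

theorem eulerDerivation_apply (f : R⟦X⟧) : eulerDerivation R f = X * d⁄dX R f := rfl

@[simp] theorem eulerDerivation_X : eulerDerivation R X = X := by
  simp [eulerDerivation_apply]

@[simp] theorem coeff_eulerDerivation (f : R⟦X⟧) (n : ℕ) :
    coeff n (eulerDerivation R f) = n * coeff n f := by
  rw [eulerDerivation_apply]
  rcases n with _ | n
  · simp
  · rw [coeff_succ_X_mul, coeff_derivative, mul_comm, Nat.cast_succ]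

end PowerSeries

/-- The roles are `t₁ = θs`, `t₂ = θ²s`, `t₃ = θ³s`; `h₂` and `h₃` are `h₁` differentiated by `θ`,
so all of `t₁`, `t₂`, `t₃`, `x²` are rational functions of `s`. -/
theorem euler_ode_of_relations {F : Type*} [Field F] [CharZero F] {s x t₁ t₂ t₃ : F}
    (hs : s ≠ 0) (hs₁ : s - 1 ≠ 0) (hs₂ : 2 - s ≠ 0)
    (hx : x ^ 2 * (s ^ 3 * (2 - s)) = 2 * s - 1)
    (h₁ : 3 * (s - 1) ^ 2 * t₁ = s * (2 * s - 1) * (2 - s))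
    (h₂ : 3 * (s - 1) ^ 2 * t₂ + 6 * (s - 1) * t₁ ^ 2 = (-6 * s ^ 2 + 10 * s - 2) * t₁)
    (h₃ : 3 * (s - 1) ^ 2 * t₃ + 18 * (s - 1) * t₁ * t₂ + 6 * t₁ ^ 3
      = (10 - 12 * s) * t₁ ^ 2 + (-6 * s ^ 2 + 10 * s - 2) * t₂) :
    (9 * t₃ - 18 * t₂ - 4 * t₁ + 8 * s) + x ^ 2 * (-18 * t₃ + 4 * t₁ - 4 * s)
      + x ^ 4 * (9 * t₃ + 18 * t₂ + 8 * t₁) = 4 - 2 * x ^ 2 := by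
  have hd : 3 * (s - 1) ^ 2 ≠ 0 := mul_ne_zero three_ne_zero (pow_ne_zero 2 hs₁)
  have ex : x ^ 2 = (2 * s - 1) / (s ^ 3 * (2 - s)) :=
    eq_div_of_mul_eq (mul_ne_zero (pow_ne_zero 3 hs) hs₂) hx
  have e₁ : t₁ = s * (2 * s - 1) * (2 - s) / (3 * (s - 1) ^ 2) :=
    eq_div_of_mul_eq hd (by linear_combination h₁)
  have e₂ : t₂ = ((-6 * s ^ 2 + 10 * s - 2) * t₁ - 6 * (s - 1) * t₁ ^ 2) / (3 * (s - 1) ^ 2) :=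
    eq_div_of_mul_eq hd (by linear_combination h₂)
  have e₃ : t₃ = ((10 - 12 * s) * t₁ ^ 2 + (-6 * s ^ 2 + 10 * s - 2) * t₂
      - 18 * (s - 1) * t₁ * t₂ - 6 * t₁ ^ 3) / (3 * (s - 1) ^ 2) :=
    eq_div_of_mul_eq hd (by linear_combination h₃)
  rw [show x ^ 4 = (x ^ 2) ^ 2 by ring, ex, e₃, e₂, e₁]
  field_simp
  ring

section QuarticSolution

variable {K : Type*} [Field K] [CharZero K] {S : K⟦X⟧}

local notation "θ" => eulerDerivation K

theorem mul_eulerDerivation_of_quartic (heq : X ^ 2 * S ^ 4 - 2 * X ^ 2 * S ^ 3 + 2 * S - 1 = 0) :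
    3 * (S - 1) ^ 2 * θ S = S * (2 * S - 1) * (2 - S) := by
  have hθ := congrArg θ heq
  simp only [Derivation.leibniz, Derivation.leibniz_pow, map_add, map_sub, map_zero,
    Derivation.map_ofNat, Derivation.map_one_eq_zero, eulerDerivation_X, smul_eq_mul,
    nsmul_eq_mul] at hθ
  refine mul_left_cancel₀ (two_ne_zero : (2 : K⟦X⟧) ≠ 0) ?_
  linear_combination S * (2 - S) * hθ - (2 * S * (2 - S) - (4 * S - 6) * θ S) * heq

/-- The third-order equation for `s`, rewritten through `X s' = θs`, `X² s'' = θ²s - θs`,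
`X³ s''' = θ³s - 3θ²s + 2θs` and sorted by powers of `X²`. -/
theorem quartic_euler_ode (h0 : constantCoeff S = 1 / 2)
    (heq : X ^ 2 * S ^ 4 - 2 * X ^ 2 * S ^ 3 + 2 * S - 1 = 0) :
    (9 * θ (θ (θ S)) - 18 * θ (θ S) - 4 * θ S + 8 * S)
      + X ^ 2 * (-18 * θ (θ (θ S)) + 4 * θ S - 4 * S)
      + X ^ 4 * (9 * θ (θ (θ S)) + 18 * θ (θ S) + 8 * θ S) = 4 - 2 * X ^ 2 := by
  have hx : X ^ 2 * (S ^ 3 * (2 - S)) = 2 * S - 1 := by linear_combination -heq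
  have h₁ := mul_eulerDerivation_of_quartic heq
  have h₂ : 3 * (S - 1) ^ 2 * θ (θ S) + 6 * (S - 1) * θ S ^ 2
      = (-6 * S ^ 2 + 10 * S - 2) * θ S := by
    have hθ := congrArg θ h₁
    simp only [Derivation.leibniz, Derivation.leibniz_pow, map_sub,
      Derivation.map_ofNat, Derivation.map_one_eq_zero, smul_eq_mul, nsmul_eq_mul] at hθ
    linear_combination hθ
  have h₃ : 3 * (S - 1) ^ 2 * θ (θ (θ S)) + 18 * (S - 1) * θ S * θ (θ S) + 6 * θ S ^ 3
      = (10 - 12 * S) * θ S ^ 2 + (-6 * S ^ 2 + 10 * S - 2) * θ (θ S) := by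
    have hθ := congrArg θ h₂
    simp only [Derivation.leibniz, Derivation.leibniz_pow, map_add, map_sub, map_neg,
      Derivation.map_ofNat, Derivation.map_one_eq_zero, smul_eq_mul, nsmul_eq_mul] at hθ
    linear_combination hθ
  have hS : S ≠ 0 := fun h ↦ by simp [h] at h0
  have hS₁ : S - 1 ≠ 0 := fun h ↦ by
    have := congrArg constantCoeff h
    simp only [map_sub, map_one, map_zero, h0] at this
    norm_num at this
  have hS₂ : 2 - S ≠ 0 := fun h ↦ by
    have := congrArg constantCoeff h
    simp only [map_sub, map_ofNat, map_zero, h0] at this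
    norm_num at this
  set φ := algebraMap K⟦X⟧ (FractionRing K⟦X⟧)
  have hφ : Function.Injective φ := IsFractionRing.injective _ _
  apply hφ
  simp only [map_add, map_sub, map_mul, map_pow, map_neg, map_ofNat]
  exact euler_ode_of_relations
    (by simpa [map_ofNat] using hφ.ne hS) (by simpa [map_ofNat] using hφ.ne hS₁)
    (by simpa [map_ofNat] using hφ.ne hS₂) (by simpa [map_ofNat] using congrArg φ hx)
    (by simpa [map_ofNat] using congrArg φ h₁) (by simpa [map_ofNat] using congrArg φ h₂)
    (by simpa [map_ofNat] using congrArg φ h₃)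

end QuarticSolution

/-- The coefficients of the power series solution of
`k²s⁴ − 2k²s³ + 2s − 1 = 0` with `s(0) = 1/2` satisfy the linear recurrence
`(3n+10)(3n+14)(n+2) s_{n+4} + n(3n+2)(3n+4) s_n = 2(9n³+54n²+106n+70) s_{n+2}`. -/
theorem stmt1 (S : PowerSeries ℝ)
    (h0 : PowerSeries.constantCoeff S = 1/2)
    (heq : X^2 * S^4 - 2 * X^2 * S^3 + 2 * S - 1 = 0) :
    ∀ n : ℕ,
      ((3*n+10) * (3*n+14) * (n+2) : ℝ) * PowerSeries.coeff (n+4) S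
        + (n * (3*n+2) * (3*n+4) : ℝ) * PowerSeries.coeff n S
      = 2 * (9*(n:ℝ)^3 + 54*(n:ℝ)^2 + 106*n + 70) * PowerSeries.coeff (n+2) S := by
  intro n
  have hc := congrArg (coeff (n + 4)) (quartic_euler_ode h0 heq)
  simp only [neg_mul, map_add, map_sub, map_neg, coeff_ofNat_mul, coeff_eulerDerivation,
    Nat.cast_add, Nat.cast_ofNat, coeff_X_pow_mul', le_add_iff_nonneg_left, zero_le, ↓reduceIte,
    Nat.reduceSubDiff, add_tsub_cancel_right, coeff_ofNat, Nat.add_eq_zero_iff,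
    OfNat.ofNat_ne_zero, and_false, coeff_X_pow, Nat.reduceEqDiff, mul_zero, sub_self] at hc
  linear_combination hc
end

section
/- Let φ(x) = x(x+2)³/(2x+1)³. The hypergeometric function ₂F₁(1/2, 5/6; 5/3; ·) satisfies the algebraic transformation ₂F₁(1/2, 5/6; 5/3; φ(x)) = 4(2x+1)^{3/2}/(x+2)² for x in a neighborhood of 0 (as an identity of formal power series in x, or for real x ≥ 0 small). -/
open scoped Nat

/-- Coefficients of the Gauss hypergeometric series `₂F₁(1/2, 5/6; 5/3; ·)`. -/
noncomputable def hypCoeff (n : ℕ) : ℝ :=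
  (ascPochhammer ℝ n).eval (1/2) * (ascPochhammer ℝ n).eval (5/6)
    / ((ascPochhammer ℝ n).eval (5/3) * n !)

/-- The hypergeometric function `₂F₁(1/2, 5/6; 5/3; ·)` as a sum. -/
noncomputable def hypF (z : ℝ) : ℝ := ∑' n : ℕ, hypCoeff n * z ^ n

/-!
Substituting `s = √(2x+1)` turns `φ` into the rational map `Φ s = (s²-1)(s²+3)³/(16s⁶)`, with
`Φ 1 = 0` and `Φ' 1 = 8`, and the right-hand side into `G s = 16s³/(s²+3)²`. So `A = G ∘ Φ⁻¹` is
analytic at `0` with `A 0 = 1`, and a rational-function identity in `s` shows that it solves the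
hypergeometric equation `z(1-z)A'' + (c - (a+b+1)z)A' - abA = 0` for `(a, b, c) = (1/2, 5/6, 5/3)`.
Comparing Taylor coefficients gives `(n+1)(n+c)uₙ₊₁ = (n+a)(n+b)uₙ`, which together with `u₀ = 1`
forces `uₙ = (a)ₙ(b)ₙ/((c)ₙ n!)`, i.e. `A = ₂F₁(1/2, 5/6; 5/3; ·)` near `0`.
-/

open Filter Topology FormalMultilinearSeries

theorem eq_ordinaryHypergeometricCoefficient_of_recurrence {𝕂 : Type*} [Field 𝕂] [CharZero 𝕂]
    {a b c : 𝕂} (hc : ∀ n : ℕ, (n : 𝕂) + c ≠ 0) {u : ℕ → 𝕂} (h₀ : u 0 = 1)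
    (hrec : ∀ n : ℕ, (n + 1) * (n + c) * u (n + 1) = (n + a) * (n + b) * u n) (n : ℕ) :
    u n = ordinaryHypergeometricCoefficient a b c n := by
  induction n with
  | zero => simp [ordinaryHypergeometricCoefficient, h₀]
  | succ n ih =>
    have hpoch : (ascPochhammer 𝕂 n).eval c ≠ 0 := by
      rw [Ne, ascPochhammer_eval_eq_zero_iff]
      rintro ⟨k, -, hk⟩
      exact hc k (by rw [hk]; ring)
    have hcn : c + n ≠ 0 := by rw [add_comm]; exact hc n
    have hstep := hrec n
    rw [ih] at hstep
    simp only [ordinaryHypergeometricCoefficient, ascPochhammer_succ_eval, Nat.factorial_succ,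
      Nat.cast_mul, Nat.cast_succ] at hstep ⊢
    field_simp at hstep ⊢
    linear_combination hstep

section PowerSeries

variable {𝕜 : Type*} [NontriviallyNormedField 𝕜]

theorem HasSum.mul_left_of_shift {v w : ℕ → 𝕜} {z S : 𝕜} (h : HasSum (fun n => z ^ n * v n) S)
    (hw₀ : w 0 = 0) (hw : ∀ n, w (n + 1) = v n) : HasSum (fun n => z ^ n * w n) (z * S) := by
  rw [← hasSum_nat_add_iff' 1]
  simpa [hw₀, hw, pow_succ, mul_comm, mul_left_comm, mul_assoc] using h.mul_left z

theorem HasDerivAt.comp_of_eventually_rightInverse {f g F : 𝕜 → 𝕜} {f' F' z : 𝕜}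
    (hF : HasDerivAt F (F' * f') (g z)) (hf : HasDerivAt f f' (g z))
    (hg : DifferentiableAt 𝕜 g z) (hinv : ∀ᶠ w in 𝓝 z, f (g w) = w) :
    HasDerivAt (F ∘ g) F' z := by
  have hf'g : f' * _root_.deriv g z = 1 :=
    ((hf.comp z hg.hasDerivAt).congr_of_eventuallyEq (hinv.mono fun w hw => hw.symm)).unique
      (hasDerivAt_id z)
  simpa [mul_assoc, hf'g] using hF.comp z hg.hasDerivAt

variable [CompleteSpace 𝕜]

theorem HasFPowerSeriesAt.exists_hasFPowerSeriesAt_deriv {f : 𝕜 → 𝕜}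
    {p : FormalMultilinearSeries 𝕜 𝕜 𝕜} {x : 𝕜} (hp : HasFPowerSeriesAt f p x) :
    ∃ q : FormalMultilinearSeries 𝕜 𝕜 𝕜, HasFPowerSeriesAt (deriv f) q x ∧
      ∀ n, q.coeff n = (n + 1) * p.coeff (n + 1) := by
  obtain ⟨r, hr⟩ := hp
  let e := ContinuousLinearMap.apply 𝕜 𝕜 (1 : 𝕜)
  refine ⟨e.compFormalMultilinearSeries p.derivSeries, ?_, fun n => ?_⟩
  · have h := (e.comp_hasFPowerSeriesOnBall hr.fderiv).hasFPowerSeriesAt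
    convert h using 1
    funext y
    simp [e]
  · change e (p.derivSeries.coeff n) = _
    simp [e, nsmul_eq_mul]

theorem HasFPowerSeriesAt.coeff_succ_of_hypergeometric_ode {a b c : 𝕜}
    {f : 𝕜 → 𝕜} {p : FormalMultilinearSeries 𝕜 𝕜 𝕜} (hp : HasFPowerSeriesAt f p 0)
    (hode : ∀ᶠ z in 𝓝 0, z * (1 - z) * deriv (deriv f) z + (c - (a + b + 1) * z) * deriv f z
      - a * b * f z = 0) (n : ℕ) :
    (n + 1) * (n + c) * p.coeff (n + 1) = (n + a) * (n + b) * p.coeff n := by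
  obtain ⟨q₁, hq₁, hq₁_coeff⟩ := hp.exists_hasFPowerSeriesAt_deriv
  obtain ⟨q₂, hq₂, hq₂_coeff⟩ := hq₁.exists_hasFPowerSeriesAt_deriv
  set d : ℕ → 𝕜 := fun n => (n + 1) * (n + c) * p.coeff (n + 1) - (n + a) * (n + b) * p.coeff n
  have hd : HasFPowerSeriesAt 0 (ofScalars 𝕜 d) 0 := by
    rw [hasFPowerSeriesAt_iff]
    filter_upwards [hasFPowerSeriesAt_iff.mp hp, hasFPowerSeriesAt_iff.mp hq₁,
      hasFPowerSeriesAt_iff.mp hq₂, hode] with z h₀ h₁ h₂ hz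
    simp only [zero_add, smul_eq_mul, coeff_ofScalars, hq₁_coeff, hq₂_coeff] at h₀ h₁ h₂ ⊢
    -- the series of `z f'`, `z f''` and `z² f''`
    have e₁ := h₁.mul_left_of_shift (w := fun n => n * p.coeff n) (by simp) (by simp)
    have e₂ := h₂.mul_left_of_shift (w := fun n => n * (n + 1) * p.coeff (n + 1)) (by simp)
      (by intro n; push_cast; ring)
    have e₃ := e₂.mul_left_of_shift (w := fun n => n * (n - 1) * p.coeff n) (by simp)
      (by intro n; push_cast; ring)
    convert (((e₂.sub e₃).add (h₁.mul_left c)).sub (e₁.mul_left (a + b + 1))).sub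
      (h₀.mul_left (a * b)) using 1
    · funext n
      simp only [d]
      ring
    · rw [Pi.zero_apply]
      linear_combination -hz
  simpa [d, sub_eq_zero] using (ofScalars_eq_zero 𝕜 (c := d) n).mp (by rw [hd.eq_zero]; rfl)

theorem AnalyticAt.eventually_hasSum_of_hypergeometric_ode [CharZero 𝕜]
    {a b c : 𝕜} (hc : ∀ n : ℕ, (n : 𝕜) + c ≠ 0) {f : 𝕜 → 𝕜} (hf : AnalyticAt 𝕜 f 0)
    (hf₀ : f 0 = 1)
    (hode : ∀ᶠ z in 𝓝 0, z * (1 - z) * deriv (deriv f) z + (c - (a + b + 1) * z) * deriv f z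
      - a * b * f z = 0) :
    ∀ᶠ z in 𝓝 0, HasSum (fun n => ordinaryHypergeometricCoefficient a b c n * z ^ n) (f z) := by
  obtain ⟨p, hp⟩ := hf
  have hcoeff := eq_ordinaryHypergeometricCoefficient_of_recurrence hc
    ((hp.coeff_zero 1).trans hf₀) (hp.coeff_succ_of_hypergeometric_ode hode)
  filter_upwards [hasFPowerSeriesAt_iff.mp hp] with z hz
  simpa [← hcoeff, mul_comm] using hz

theorem AnalyticAt.exists_localInverse [CharZero 𝕜] {f : 𝕜 → 𝕜} {a : 𝕜}
    (hf : AnalyticAt 𝕜 f a) (hf' : deriv f a ≠ 0) :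
    ∃ g : 𝕜 → 𝕜, AnalyticAt 𝕜 g (f a) ∧ (∀ᶠ x in 𝓝 a, g (f x) = x) ∧
      ∀ᶠ y in 𝓝 (f a), f (g y) = y :=
  ⟨_, hf.analyticAt_localInverse hf', HasStrictDerivAt.eventually_left_inverse ..,
    HasStrictDerivAt.eventually_right_inverse ..⟩

end PowerSeries

noncomputable def Φ (s : ℝ) : ℝ := (s ^ 2 - 1) * (s ^ 2 + 3) ^ 3 / (16 * s ^ 6)

noncomputable def Φ' (s : ℝ) : ℝ := (s ^ 2 + 3) ^ 2 * (s ^ 2 - 3) ^ 2 / (8 * s ^ 7)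

noncomputable def G (s : ℝ) : ℝ := 16 * s ^ 3 / (s ^ 2 + 3) ^ 2

/-- `G₁` and `G₂` are the first two derivatives of `G ∘ Φ⁻¹`, written in the variable `s`. -/
noncomputable def G₁ (s : ℝ) : ℝ := 128 * s ^ 9 * (9 - s ^ 2) / ((s ^ 2 + 3) ^ 5 * (s ^ 2 - 3) ^ 2)

noncomputable def G₂ (s : ℝ) : ℝ :=
  3072 * s ^ 15 * (s ^ 6 - 21 * s ^ 4 + 87 * s ^ 2 - 243) / ((s ^ 2 + 3) ^ 8 * (s ^ 2 - 3) ^ 5)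

theorem Φ_one : Φ 1 = 0 := by norm_num [Φ]

theorem hasDerivAt_Φ {s : ℝ} (hs : s ≠ 0) : HasDerivAt Φ (Φ' s) s := by
  have h := ((((hasDerivAt_pow 2 s).sub_const 1).mul
    (((hasDerivAt_pow 2 s).add_const 3).pow 3)).div
    ((hasDerivAt_pow 6 s).const_mul 16) (by positivity))
  refine h.congr_deriv ?_
  simp only [Φ', Pi.mul_apply, Pi.pow_apply]
  field_simp
  ring

theorem hasDerivAt_G {s : ℝ} (hs : s ≠ 0) (hs₃ : s ^ 2 ≠ 3) : HasDerivAt G (G₁ s * Φ' s) s := by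
  have h := ((hasDerivAt_pow 3 s).const_mul 16).div
    (((hasDerivAt_pow 2 s).add_const 3).pow 2) (by simp only [Pi.pow_apply]; positivity)
  refine h.congr_deriv ?_
  have : s ^ 2 - 3 ≠ 0 := sub_ne_zero.mpr hs₃
  simp only [G₁, Φ', Pi.pow_apply]
  field_simp
  ring

theorem hasDerivAt_G₁ {s : ℝ} (hs : s ≠ 0) (hs₃ : s ^ 2 ≠ 3) :
    HasDerivAt G₁ (G₂ s * Φ' s) s := by
  have : s ^ 2 - 3 ≠ 0 := sub_ne_zero.mpr hs₃
  have h := (((hasDerivAt_pow 9 s).const_mul 128).mul ((hasDerivAt_pow 2 s).const_sub 9)).div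
    ((((hasDerivAt_pow 2 s).add_const 3).pow 5).mul (((hasDerivAt_pow 2 s).sub_const 3).pow 2))
    (by simp only [Pi.mul_apply, Pi.pow_apply]; positivity)
  refine h.congr_deriv ?_
  simp only [G₂, Φ', Pi.mul_apply, Pi.pow_apply]
  field_simp
  ring

theorem hypergeometric_ode_Φ {s : ℝ} (hs : s ≠ 0) (hs₃ : s ^ 2 ≠ 3) :
    Φ s * (1 - Φ s) * G₂ s + (5 / 3 - (1 / 2 + 5 / 6 + 1) * Φ s) * G₁ s
      - 1 / 2 * (5 / 6) * G s = 0 := by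
  have : s ^ 2 - 3 ≠ 0 := sub_ne_zero.mpr hs₃
  simp only [Φ, G, G₁, G₂]
  field_simp
  ring

theorem analyticAt_Φ_one : AnalyticAt ℝ Φ 1 := by
  unfold Φ
  fun_prop (disch := norm_num)

theorem analyticAt_G_one : AnalyticAt ℝ G 1 := by
  unfold G
  fun_prop (disch := norm_num)

theorem eventually_hypergeometric_ode_G_comp {ψ : ℝ → ℝ} (hψ : AnalyticAt ℝ ψ 0) (hψ₀ : ψ 0 = 1)
    (hinv : ∀ᶠ z in 𝓝 0, Φ (ψ z) = z) :
    ∀ᶠ z in 𝓝 0, z * (1 - z) * deriv (deriv (G ∘ ψ)) z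
      + (5 / 3 - (1 / 2 + 5 / 6 + 1) * z) * deriv (G ∘ ψ) z - 1 / 2 * (5 / 6) * (G ∘ ψ) z = 0 := by
  have hgood : ∀ᶠ z in 𝓝 0, (AnalyticAt ℝ ψ z ∧ Φ (ψ z) = z) ∧ ψ z ≠ 0 ∧ ψ z ^ 2 ≠ 3 :=
    (hψ.eventually_analyticAt.and hinv).and <|
      (hψ.continuousAt.eventually_ne (by simp [hψ₀])).and
      ((hψ.continuousAt.pow 2).eventually_ne (by simp [hψ₀]))
  have hderiv {F F' : ℝ → ℝ} (hF : ∀ s, s ≠ 0 → s ^ 2 ≠ 3 → HasDerivAt F (F' s * Φ' s) s) :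
      ∀ᶠ z in 𝓝 0, HasDerivAt (F ∘ ψ) (F' (ψ z)) z := by
    filter_upwards [hgood.eventually_nhds] with z hz
    obtain ⟨⟨hψz, -⟩, hz₀, hz₃⟩ := hz.self_of_nhds
    exact (hF _ hz₀ hz₃).comp_of_eventually_rightInverse (hasDerivAt_Φ hz₀)
      hψz.differentiableAt (hz.mono fun w hw => hw.1.2)
  have h₁ := hderiv fun s => hasDerivAt_G (s := s)
  have h₂ := hderiv fun s => hasDerivAt_G₁ (s := s)
  filter_upwards [h₁.eventually_nhds, h₂, hgood] with z hz₁ hz₂ hz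
  obtain ⟨⟨-, hz⟩, hz₀, hz₃⟩ := hz
  have hderiv₂ : deriv (deriv (G ∘ ψ)) z = G₂ (ψ z) :=
    (EventuallyEq.deriv_eq (f₁ := deriv (G ∘ ψ)) (f := G₁ ∘ ψ)
      (hz₁.mono fun w hw => hw.deriv)).trans hz₂.deriv
  rw [hderiv₂, hz₁.self_of_nhds.deriv, Function.comp_apply]
  simpa only [hz] using hypergeometric_ode_Φ hz₀ hz₃

theorem hypCoeff_eq_ordinaryHypergeometricCoefficient (n : ℕ) :
    hypCoeff n = ordinaryHypergeometricCoefficient (1 / 2 : ℝ) (5 / 6) (5 / 3) n := by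
  rw [hypCoeff, div_eq_mul_inv, mul_inv]
  ring

theorem eventually_hypF_eq_G_comp {ψ : ℝ → ℝ} (hψ : AnalyticAt ℝ ψ 0) (hψ₀ : ψ 0 = 1)
    (hinv : ∀ᶠ z in 𝓝 0, Φ (ψ z) = z) : ∀ᶠ z in 𝓝 0, hypF z = G (ψ z) := by
  have hc (n : ℕ) : (n : ℝ) + 5 / 3 ≠ 0 := by positivity
  have hG₀ : (G ∘ ψ) 0 = 1 := by norm_num [G, hψ₀]
  filter_upwards [(analyticAt_G_one.comp_of_eq hψ hψ₀).eventually_hasSum_of_hypergeometric_ode hc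
    hG₀ (eventually_hypergeometric_ode_G_comp hψ hψ₀ hinv)] with z hz
  simpa only [hypF, hypCoeff_eq_ordinaryHypergeometricCoefficient, Function.comp_apply] using hz.tsum_eq

theorem Φ_sqrt {x : ℝ} (hx : 0 < 2 * x + 1) :
    Φ √(2 * x + 1) = x * (x + 2) ^ 3 / (2 * x + 1) ^ 3 := by
  have hs : √(2 * x + 1) ^ 2 = 2 * x + 1 := Real.sq_sqrt hx.le
  rw [Φ, show √(2 * x + 1) ^ 6 = (√(2 * x + 1) ^ 2) ^ 3 by ring, hs]
  field_simp
  ring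

theorem G_sqrt {x : ℝ} (hx : 0 < 2 * x + 1) :
    G √(2 * x + 1) = 4 * (2 * x + 1) ^ ((3 : ℝ) / 2) / (x + 2) ^ 2 := by
  have hs : √(2 * x + 1) ^ 2 = 2 * x + 1 := Real.sq_sqrt hx.le
  have hpow : (2 * x + 1) ^ ((3 : ℝ) / 2) = √(2 * x + 1) ^ 3 := by
    rw [Real.sqrt_eq_rpow, ← Real.rpow_natCast, ← Real.rpow_mul hx.le]
    norm_num
  have hx₂ : x + 2 ≠ 0 := by linarith
  rw [G, hpow, hs]
  field_simp
  ring

theorem exists_localInverse_Φ : ∃ ψ : ℝ → ℝ, AnalyticAt ℝ ψ 0 ∧ ψ 0 = 1 ∧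
    (∀ᶠ s in 𝓝 1, ψ (Φ s) = s) ∧ ∀ᶠ z in 𝓝 0, Φ (ψ z) = z := by
  have hΦ'₁ : deriv Φ 1 ≠ 0 := by
    rw [(hasDerivAt_Φ one_ne_zero).deriv]
    norm_num [Φ']
  obtain ⟨ψ, hψ, hleft, hright⟩ := analyticAt_Φ_one.exists_localInverse hΦ'₁
  rw [Φ_one] at hψ hright
  exact ⟨ψ, hψ, by simpa [Φ_one] using hleft.self_of_nhds, hleft, hright⟩

theorem eventually_hypF_φ_eq :
    ∀ᶠ x in 𝓝 (0 : ℝ),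
      hypF (x * (x + 2) ^ 3 / (2 * x + 1) ^ 3) = 4 * (2 * x + 1) ^ ((3 : ℝ) / 2) / (x + 2) ^ 2 := by
  obtain ⟨ψ, hψ, hψ₀, hleft, hright⟩ := exists_localInverse_Φ
  have hsqrt : Tendsto (fun x : ℝ => √(2 * x + 1)) (𝓝 0) (𝓝 1) := by
    simpa using (((continuous_const.mul continuous_id).add continuous_const).sqrt.tendsto 0 :
      Tendsto (fun x : ℝ => √(2 * x + 1)) _ _)
  have hΦsqrt : Tendsto (fun x : ℝ => Φ √(2 * x + 1)) (𝓝 0) (𝓝 0) := by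
    have h := analyticAt_Φ_one.continuousAt.tendsto.comp hsqrt
    rwa [Φ_one] at h
  filter_upwards [hΦsqrt.eventually (eventually_hypF_eq_G_comp hψ hψ₀ hright),
    hsqrt.eventually hleft, Ioi_mem_nhds (show (-1 / 2 : ℝ) < 0 by norm_num)] with x hF hψx hx
  have hx : 0 < 2 * x + 1 := by linarith [Set.mem_Ioi.mp hx]
  rw [← Φ_sqrt hx, ← G_sqrt hx, hF, hψx]

/-- With `φ(x) = x(x+2)³/(2x+1)³`, for small real `x ≥ 0` one has
`₂F₁(1/2, 5/6; 5/3; φ(x)) = 4(2x+1)^{3/2}/(x+2)²`. -/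
theorem stmt3 :
    ∃ ε > (0:ℝ), ∀ x : ℝ, 0 ≤ x → x < ε →
      hypF (x * (x + 2)^3 / (2*x + 1)^3)
        = 4 * (2*x + 1) ^ ((3:ℝ)/2) / (x + 2)^2 := by
  obtain ⟨ε, hε, hball⟩ := Metric.eventually_nhds_iff.mp eventually_hypF_φ_eq
  exact ⟨ε, hε, fun x hx₀ hxε => hball (by rwa [Real.dist_eq, sub_zero, abs_of_nonneg hx₀])⟩
end

section
/- Substituting t = (x²+x+1)/(1+x−2x²) and k² = φ(x) with φ(x) = x(x+2)³/(2x+1)³ into the quartic −27(1−k²)t⁴ + 18(1−k²)t² + 2(2−k²)²t + 1 − k² + k⁴ yields identically zero as a rational function of x. -/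
/-- The quartic `−27(1−k²)t⁴ + 18(1−k²)t² + 2(2−k²)²t + 1 − k² + k⁴` as a function of `k2 = k²`. -/
def quartic {K : Type*} [Field K] (k2 t : K) : K :=
  -27 * (1 - k2) * t ^ 4 + 18 * (1 - k2) * t ^ 2 + 2 * (2 - k2) ^ 2 * t + 1 - k2 + k2 ^ 2

theorem quartic_phi_eq_zero {K : Type*} [Field K] {x : K} (hx : 1 + x - 2 * x ^ 2 ≠ 0) :
    quartic (x * (x + 2) ^ 3 / (2 * x + 1) ^ 3) ((x ^ 2 + x + 1) / (1 + x - 2 * x ^ 2)) = 0 := by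
  rw [show 1 + x - 2 * x ^ 2 = (1 - x) * (2 * x + 1) by ring] at hx ⊢
  obtain ⟨hb, ha⟩ := mul_ne_zero_iff.mp hx
  -- `field_simp` only recognises the nonzero denominators once they are atoms.
  generalize hb_def : 1 - x = b at hb ⊢
  generalize ha_def : 2 * x + 1 = a at ha ⊢
  unfold quartic
  field_simp
  subst ha_def hb_def
  ring

/-- Substituting `t = (x²+x+1)/(1+x−2x²)` and `k² = φ(x)` with
`φ(x) = x(x+2)³/(2x+1)³` into the quartic
`−27(1−k²)t⁴ + 18(1−k²)t² + 2(2−k²)²t + 1 − k² + k⁴` yields identically zero,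
as an identity of rational functions of `x`. -/
theorem stmt5 :
    ∀ x : ℝ, 2*x + 1 ≠ 0 → 1 + x - 2*x^2 ≠ 0 →
      -27 * (1 - x * (x + 2)^3 / (2*x + 1)^3)
          * ((x^2 + x + 1)/(1 + x - 2*x^2))^4
        + 18 * (1 - x * (x + 2)^3 / (2*x + 1)^3)
          * ((x^2 + x + 1)/(1 + x - 2*x^2))^2
        + 2 * (2 - x * (x + 2)^3 / (2*x + 1)^3)^2
          * ((x^2 + x + 1)/(1 + x - 2*x^2))
        + 1 - x * (x + 2)^3 / (2*x + 1)^3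
        + (x * (x + 2)^3 / (2*x + 1)^3)^2 = 0 :=
  fun _ _ hx => quartic_phi_eq_zero hx
end

section
/- If s ≠ 0, s ≠ 1 and s satisfies k²s⁴ − 2k²s³ + 2s − 1 = 0, then t = (s² − s + 1)/(3s(1−s)) satisfies −27(1−k²)t⁴ + 18(1−k²)t² + 2(2−k²)²t + 1 − k² + k⁴ = 0. -/
/-!
The map `R(z) = (z² − z + 1)/(3z(1 − z))` is invariant under `z ↦ 1 − z`, and substituting it
into the quartic in `t` and clearing the denominator `(3z(1 − z))⁴` gives exactly
`27 · P(z) · P(1 − z)`, where `P(z) = k²z⁴ − 2k²z³ + 2z − 1` is the quartic in `s`.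
So every root of `P` other than `0, 1` is sent by `R` to a root of the quartic in `t`.
-/

section

variable {K : Type*}

def sQuartic [CommRing K] (k s : K) : K :=
  k^2 * s^4 - 2 * k^2 * s^3 + 2 * s - 1

def tQuartic [CommRing K] (k t : K) : K :=
  -27 * (1 - k^2) * t^4 + 18 * (1 - k^2) * t^2 + 2 * (2 - k^2)^2 * t + 1 - k^2 + k^4

theorem tQuartic_div_eq_sQuartic_mul [Field K] (h3 : (3 : K) ≠ 0) (k : K) {s : K}
    (hs0 : s ≠ 0) (hs1 : s ≠ 1) :
    tQuartic k ((s^2 - s + 1) / (3 * s * (1 - s)))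
      = sQuartic k s * sQuartic k (1 - s) / (3 * (s * (1 - s))^4) := by
  have hs1' : 1 - s ≠ 0 := sub_ne_zero.mpr hs1.symm
  unfold tQuartic sQuartic
  field_simp
  ring

end

/-- If `s ∉ {0,1}` satisfies `k²s⁴ − 2k²s³ + 2s − 1 = 0`, then
`t = (s² − s + 1)/(3s(1−s))` satisfies
`−27(1−k²)t⁴ + 18(1−k²)t² + 2(2−k²)²t + 1 − k² + k⁴ = 0`. -/
theorem stmt6 (k s : ℝ) (hs0 : s ≠ 0) (hs1 : s ≠ 1)
    (h : k^2 * s^4 - 2 * k^2 * s^3 + 2 * s - 1 = 0) :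
    -27 * (1 - k^2) * ((s^2 - s + 1)/(3 * s * (1 - s)))^4
      + 18 * (1 - k^2) * ((s^2 - s + 1)/(3 * s * (1 - s)))^2
      + 2 * (2 - k^2)^2 * ((s^2 - s + 1)/(3 * s * (1 - s)))
      + 1 - k^2 + k^4 = 0 := by
  change tQuartic k _ = 0
  rw [tQuartic_div_eq_sQuartic_mul three_ne_zero k hs0 hs1, sQuartic, h, zero_mul, zero_div]
end
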